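/- arXiv:2204.01877 — 2 statements merged into one kernel-verified Lean document; each statement's English description precedes it below -/
import Mathlib

section
/- (Forward step method, weakly monotone case.) Let η ∈ ℝⁿ be a positive vector and let F : ℝⁿ → ℝⁿ be continuously differentiable, Lipschitz with respect to ‖·‖_{∞,η⁻¹}, satisfy μ_{∞,η⁻¹}(−DF(x)) ≤ 0 for all x ∈ ℝⁿ, and let d > 0 be a diagonal bound for F. Suppose Zero(F) ≠ ∅. Then for every α ∈ (0, 1/d), the sequence defined by x_{k+1} = x_k − αF(x_k) (from any initial point x_0) converges to some element of Zero(F). -/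
/-!
With `θ = α d` the forward step is the Krasnoselskii–Mann iteration
`x_{k+1} = (1 - θ) x_k + θ T x_k` of `T = id - d⁻¹ F`. Monotonicity and the diagonal bound make
every Jacobian `I - d⁻¹ DF(x)` a contraction of the weighted norm (a row-sum estimate), so by the
mean value inequality `T` is nonexpansive for it; rescaling by `η` turns it into a nonexpansive map
of `ℝⁿ` with the sup norm, having a fixed point.

For the residuals `D_k = ‖T x_k - x_k‖`, which decrease, Ishikawa's inequality
`D_{i+m} - D_i + (1 - θ)^m (1 + mθ) D_i ≤ (1 - θ)^m ‖T x_{i+m} - x_i‖` and the boundedness of the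
orbit (it is Fejér monotone with respect to every fixed point) give `(1 + mθ) inf D ≤ const` for
all `m`, so `D_k → 0`. A cluster point of the orbit is therefore a fixed point, and Fejér
monotonicity with respect to it upgrades subsequential convergence to convergence.
-/

open Filter

/-- Diagonally weighted ℓ∞ norm: ‖x‖_{∞,η⁻¹} = max_i |x_i|/η_i. -/
noncomputable def wNorm {n : ℕ} (η x : Fin n → ℝ) : ℝ := ⨆ i, |x i| / η i

/-- Diagonally weighted ℓ∞ logarithmic norm of a matrix. -/
noncomputable def logNorm {n : ℕ} (η : Fin n → ℝ) (A : Matrix (Fin n) (Fin n) ℝ) : ℝ :=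
  ⨆ i, (A i i + ∑ j ∈ Finset.univ.erase i, (η j / η i) * |A i j|)

/-- Jacobian matrix of `F` at `x`: (DF(x))_{ij} = ∂F_i/∂x_j. -/
noncomputable def jac {n : ℕ} (F : (Fin n → ℝ) → (Fin n → ℝ)) (x : Fin n → ℝ) :
    Matrix (Fin n) (Fin n) ℝ :=
  fun i j => fderiv ℝ F x (Pi.single j 1) i

open Topology Function Matrix

section KrasnoselskiiMann

variable {E : Type*} [NormedAddCommGroup E] [NormedSpace ℝ E]

def IsKrasnoselskiiMannSeq (T : E → E) (θ : ℝ) (x : ℕ → E) : Prop :=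
  ∀ k, x (k + 1) = (1 - θ) • x k + θ • T (x k)

lemma one_sub_pow_mul_one_add_le_one {θ : ℝ} (hθ : θ ≤ 1) (m : ℕ) :
    (1 - θ) ^ m * (1 + m * θ) ≤ 1 := by
  induction m with
  | zero => simp
  | succ m ih =>
    have hdrop : 0 ≤ (1 - θ) ^ m * ((m + 1) * θ ^ 2) :=
      mul_nonneg (pow_nonneg (by linarith) m) (by positivity)
    calc (1 - θ) ^ (m + 1) * (1 + ((m + 1 : ℕ) : ℝ) * θ)
        = (1 - θ) ^ m * (1 + m * θ) - (1 - θ) ^ m * ((m + 1) * θ ^ 2) := by push_cast; ring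
      _ ≤ 1 := by linarith

lemma norm_one_sub_smul_add_smul_le {θ : ℝ} (hθ0 : 0 ≤ θ) (hθ1 : θ ≤ 1) (u v : E) :
    ‖(1 - θ) • u + θ • v‖ ≤ (1 - θ) * ‖u‖ + θ * ‖v‖ := by
  refine (norm_add_le _ _).trans_eq ?_
  rw [norm_smul, norm_smul, Real.norm_of_nonneg (by linarith), Real.norm_of_nonneg hθ0]

namespace IsKrasnoselskiiMannSeq

variable {T : E → E} {θ : ℝ} {x : ℕ → E}

lemma succ_sub_eq (hx : IsKrasnoselskiiMannSeq T θ x) (k : ℕ) :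
    x (k + 1) - x k = θ • (T (x k) - x k) := by
  rw [hx k]; module

lemma norm_succ_sub_eq (hx : IsKrasnoselskiiMannSeq T θ x) (hθ : 0 ≤ θ) (k : ℕ) :
    ‖x (k + 1) - x k‖ = θ * ‖T (x k) - x k‖ := by
  rw [hx.succ_sub_eq, norm_smul, Real.norm_of_nonneg hθ]

lemma antitone_norm_sub_of_isFixedPt (hx : IsKrasnoselskiiMannSeq T θ x)
    (hT : LipschitzWith 1 T) (hθ0 : 0 ≤ θ) (hθ1 : θ ≤ 1) {z : E} (hz : IsFixedPt T z) :
    Antitone fun k => ‖x k - z‖ := by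
  refine antitone_nat_of_succ_le fun k => ?_
  have hsplit : x (k + 1) - z = (1 - θ) • (x k - z) + θ • (T (x k) - T z) := by
    rw [hx k, hz]; module
  have hTz : ‖T (x k) - T z‖ ≤ ‖x k - z‖ := by simpa using hT.norm_sub_le (x k) z
  rw [hsplit]
  refine (norm_one_sub_smul_add_smul_le hθ0 hθ1 _ _).trans ?_
  nlinarith

lemma antitone_norm_apply_sub (hx : IsKrasnoselskiiMannSeq T θ x) (hT : LipschitzWith 1 T)
    (hθ0 : 0 ≤ θ) (hθ1 : θ ≤ 1) :
    Antitone fun k => ‖T (x k) - x k‖ := by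
  refine antitone_nat_of_succ_le fun k => ?_
  have hsplit : T (x (k + 1)) - x (k + 1)
      = (T (x (k + 1)) - T (x k)) + (1 - θ) • (T (x k) - x k) := by
    rw [hx k]; module
  have hT' : ‖T (x (k + 1)) - T (x k)‖ ≤ ‖x (k + 1) - x k‖ := by
    simpa using hT.norm_sub_le (x (k + 1)) (x k)
  calc ‖T (x (k + 1)) - x (k + 1)‖
      ≤ ‖x (k + 1) - x k‖ + (1 - θ) * ‖T (x k) - x k‖ := by
        rw [hsplit]
        refine (norm_add_le _ _).trans (add_le_add hT' ?_)
        rw [norm_smul, Real.norm_of_nonneg (by linarith)]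
    _ = ‖T (x k) - x k‖ := by rw [hx.norm_succ_sub_eq hθ0]; ring

lemma norm_add_sub_le (hx : IsKrasnoselskiiMannSeq T θ x) (hT : LipschitzWith 1 T)
    (hθ0 : 0 ≤ θ) (hθ1 : θ ≤ 1) (i m : ℕ) :
    ‖x (i + m) - x i‖ ≤ m * θ * ‖T (x i) - x i‖ := by
  induction m with
  | zero => simp
  | succ m ih =>
    have hres := hx.antitone_norm_apply_sub hT hθ0 hθ1 (Nat.le_add_right i m)
    calc ‖x (i + (m + 1)) - x i‖
        ≤ ‖x (i + m + 1) - x (i + m)‖ + ‖x (i + m) - x i‖ := norm_sub_le_norm_sub_add_norm_sub _ _ _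
      _ ≤ θ * ‖T (x i) - x i‖ + m * θ * ‖T (x i) - x i‖ := by
        rw [hx.norm_succ_sub_eq hθ0]; gcongr
      _ = ((m + 1 : ℕ) : ℝ) * θ * ‖T (x i) - x i‖ := by push_cast; ring

lemma ishikawa_inequality (hx : IsKrasnoselskiiMannSeq T θ x) (hT : LipschitzWith 1 T)
    (hθ0 : 0 ≤ θ) (hθ1 : θ ≤ 1) (m i : ℕ) :
    ‖T (x (i + m)) - x (i + m)‖ - ‖T (x i) - x i‖
        + (1 - θ) ^ m * (1 + m * θ) * ‖T (x i) - x i‖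
      ≤ (1 - θ) ^ m * ‖T (x (i + m)) - x i‖ := by
  induction m generalizing i with
  | zero => simp
  | succ m ih =>
    set a := ‖T (x i) - x i‖
    set b := ‖T (x (i + 1)) - x (i + 1)‖
    set P := (1 - θ) ^ m
    have hP : 0 ≤ P := pow_nonneg (by linarith) m
    have hba : b ≤ a := hx.antitone_norm_apply_sub hT hθ0 hθ1 (Nat.le_succ i)
    have hbern := one_sub_pow_mul_one_add_le_one hθ1 m
    have hstep : ‖T (x (i + (m + 1))) - x (i + 1)‖
        ≤ (1 - θ) * ‖T (x (i + (m + 1))) - x i‖ + θ * ((m + 1) * θ * a) := by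
      have hsplit : T (x (i + (m + 1))) - x (i + 1)
          = (1 - θ) • (T (x (i + (m + 1))) - x i) + θ • (T (x (i + (m + 1))) - T (x i)) := by
        rw [hx i]; module
      have hT' : ‖T (x (i + (m + 1))) - T (x i)‖ ≤ (m + 1) * θ * a := by
        have hlip : ‖T (x (i + (m + 1))) - T (x i)‖ ≤ ‖x (i + (m + 1)) - x i‖ := by
          simpa using hT.norm_sub_le (x (i + (m + 1))) (x i)
        exact hlip.trans (by exact_mod_cast hx.norm_add_sub_le hT hθ0 hθ1 i (m + 1))
      rw [hsplit]
      refine (norm_one_sub_smul_add_smul_le hθ0 hθ1 _ _).trans ?_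
      gcongr
    have ih' := ih (i + 1)
    rw [show i + 1 + m = i + (m + 1) by omega] at ih'
    have hPstep := mul_le_mul_of_nonneg_left hstep hP
    have hprod : (a - b) * (P * (1 + m * θ) - 1) ≤ 0 :=
      mul_nonpos_of_nonneg_of_nonpos (by linarith) (by linarith)
    push_cast
    -- the weights match since `(1 - θ) (1 + (m + 1) θ) + (m + 1) θ² = 1 + m θ`
    linear_combination ih' + hPstep + hprod

lemma norm_apply_add_sub_le (hx : IsKrasnoselskiiMannSeq T θ x) (hT : LipschitzWith 1 T)
    (hθ0 : 0 ≤ θ) (hθ1 : θ ≤ 1) {z : E} (hz : IsFixedPt T z) (i m : ℕ) :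
    ‖T (x (i + m)) - x i‖ ≤ 2 * ‖x 0 - z‖ := by
  have hfejer := hx.antitone_norm_sub_of_isFixedPt hT hθ0 hθ1 hz
  have hTz : ‖T (x (i + m)) - T z‖ ≤ ‖x (i + m) - z‖ := by
    simpa using hT.norm_sub_le (x (i + m)) z
  have hzx : ‖T z - x i‖ = ‖x i - z‖ := by rw [hz, norm_sub_rev]
  calc ‖T (x (i + m)) - x i‖ ≤ ‖T (x (i + m)) - T z‖ + ‖T z - x i‖ :=
        norm_sub_le_norm_sub_add_norm_sub _ _ _
    _ ≤ ‖x 0 - z‖ + ‖x 0 - z‖ := by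
      rw [hzx]
      exact add_le_add (hTz.trans (hfejer (Nat.zero_le _))) (hfejer (Nat.zero_le _))
    _ = 2 * ‖x 0 - z‖ := by ring

theorem tendsto_norm_apply_sub (hx : IsKrasnoselskiiMannSeq T θ x) (hT : LipschitzWith 1 T)
    (hθ0 : 0 < θ) (hθ1 : θ < 1) {z : E} (hz : IsFixedPt T z) :
    Tendsto (fun k => ‖T (x k) - x k‖) atTop (𝓝 0) := by
  set D := fun k => ‖T (x k) - x k‖
  set M := 2 * ‖x 0 - z‖
  have hanti : Antitone D := hx.antitone_norm_apply_sub hT hθ0.le hθ1.le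
  have hD : Tendsto D atTop (𝓝 (⨅ k, D k)) :=
    tendsto_atTop_ciInf hanti ⟨0, Set.forall_mem_range.2 fun k => norm_nonneg _⟩
  have hbound : ∀ m : ℕ, (1 + m * θ) * ⨅ k, D k ≤ M := by
    intro m
    have hpow : 0 < (1 - θ) ^ m := pow_pos (by linarith) m
    have hlim : Tendsto (fun i => D (i + m) - D i + (1 - θ) ^ m * (1 + m * θ) * D i) atTop
        (𝓝 ((⨅ k, D k) - (⨅ k, D k) + (1 - θ) ^ m * (1 + m * θ) * ⨅ k, D k)) :=
      ((hD.comp (tendsto_add_atTop_nat m)).sub hD).add (hD.const_mul _)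
    have hle := le_of_tendsto' hlim fun i =>
      (hx.ishikawa_inequality hT hθ0.le hθ1.le m i).trans
        (mul_le_mul_of_nonneg_left (hx.norm_apply_add_sub_le hT hθ0.le hθ1.le hz i m) hpow.le)
    rw [sub_self, zero_add, mul_assoc] at hle
    exact le_of_mul_le_mul_left hle hpow
  have hinf : ⨅ k, D k = 0 := by
    refine le_antisymm ?_ (le_ciInf fun k => norm_nonneg _)
    by_contra! hpos
    obtain ⟨m, hm⟩ := exists_nat_gt (M / (θ * ⨅ k, D k))
    rw [div_lt_iff₀ (mul_pos hθ0 hpos)] at hm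
    nlinarith [hbound m]
  rwa [hinf] at hD

theorem exists_isFixedPt_tendsto [ProperSpace E] (hx : IsKrasnoselskiiMannSeq T θ x)
    (hT : LipschitzWith 1 T) (hθ0 : 0 < θ) (hθ1 : θ < 1) {z : E} (hz : IsFixedPt T z) :
    ∃ c, IsFixedPt T c ∧ Tendsto x atTop (𝓝 c) := by
  have hball : ∀ k, x k ∈ Metric.closedBall z ‖x 0 - z‖ := fun k => by
    rw [Metric.mem_closedBall, dist_eq_norm]
    exact hx.antitone_norm_sub_of_isFixedPt hT hθ0.le hθ1.le hz (Nat.zero_le k)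
  obtain ⟨c, -, φ, hφ, hsub⟩ := (isCompact_closedBall z _).tendsto_subseq hball
  have hc : IsFixedPt T c := by
    have hres := (hx.tendsto_norm_apply_sub hT hθ0 hθ1 hz).comp hφ.tendsto_atTop
    have hlim : Tendsto (fun j => ‖T (x (φ j)) - x (φ j)‖) atTop (𝓝 ‖T c - c‖) :=
      ((hT.continuous.tendsto c).comp hsub |>.sub hsub).norm
    exact sub_eq_zero.1 (norm_eq_zero.1 (tendsto_nhds_unique hlim hres))
  refine ⟨c, hc, tendsto_iff_norm_sub_tendsto_zero.2 ?_⟩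
  refine (tendsto_iff_tendsto_subseq_of_antitone
    (hx.antitone_norm_sub_of_isFixedPt hT hθ0.le hθ1.le hc) hφ.tendsto_atTop).2 ?_
  exact tendsto_iff_norm_sub_tendsto_zero.1 hsub

end IsKrasnoselskiiMannSeq
end KrasnoselskiiMann

section WeightedNorm

variable {n : ℕ} {η : Fin n → ℝ}

lemma wNorm_eq_norm_div (hη : ∀ i, 0 < η i) (v : Fin n → ℝ) : wNorm η v = ‖v / η‖ := by
  have hcoord : ∀ i, |v i| / η i = ‖(v / η) i‖ := fun i => by
    rw [Pi.div_apply, Real.norm_eq_abs, abs_div, abs_of_pos (hη i)]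
  refine le_antisymm
    (Real.iSup_le (fun i => (hcoord i).trans_le (norm_le_pi_norm _ i)) (norm_nonneg _)) ?_
  refine (pi_norm_le_iff_of_nonneg (Real.iSup_nonneg fun i => (hcoord i).symm ▸ norm_nonneg _)).2
    fun i => ?_
  rw [← hcoord]
  exact le_ciSup (f := fun i => |v i| / η i) (Set.finite_range _).bddAbove i

lemma abs_le_mul_wNorm (hη : ∀ i, 0 < η i) (v : Fin n → ℝ) (i : Fin n) :
    |v i| ≤ η i * wNorm η v := by
  rw [wNorm_eq_norm_div hη, ← div_le_iff₀' (hη i), ← abs_of_pos (hη i), ← abs_div,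
    ← Real.norm_eq_abs]
  exact norm_le_pi_norm (v / η) i

lemma wNorm_le_of_abs_le (hη : ∀ i, 0 < η i) {v : Fin n → ℝ} {M : ℝ} (hM : 0 ≤ M)
    (h : ∀ i, |v i| ≤ η i * M) : wNorm η v ≤ M :=
  Real.iSup_le (fun i => (div_le_iff₀' (hη i)).2 (h i)) hM

lemma sum_erase_mul_abs_le_of_logNorm_neg_nonpos (hη : ∀ i, 0 < η i)
    {A : Matrix (Fin n) (Fin n) ℝ} (hA : logNorm η (-A) ≤ 0) (i : Fin n) :
    ∑ j ∈ Finset.univ.erase i, η j * |A i j| ≤ η i * A i i := by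
  have hrow : -A i i + ∑ j ∈ Finset.univ.erase i, (η j / η i) * |A i j| ≤ 0 := by
    have h := le_ciSup (f := fun i => (-A) i i
      + ∑ j ∈ Finset.univ.erase i, (η j / η i) * |(-A) i j|) (Set.finite_range _).bddAbove i
    simp only [Matrix.neg_apply, abs_neg] at h
    exact h.trans (by simpa only [logNorm, Matrix.neg_apply, abs_neg] using hA)
  have hscale : ∑ j ∈ Finset.univ.erase i, η j * |A i j|
      = η i * ∑ j ∈ Finset.univ.erase i, (η j / η i) * |A i j| := by
    rw [Finset.mul_sum]
    refine Finset.sum_congr rfl fun j _ => ?_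
    field_simp [(hη i).ne']
  rw [hscale]
  exact mul_le_mul_of_nonneg_left (by linarith) (hη i).le

lemma wNorm_sub_inv_smul_mulVec_le (hη : ∀ i, 0 < η i) {A : Matrix (Fin n) (Fin n) ℝ}
    (hA : logNorm η (-A) ≤ 0) {d : ℝ} (hd : 0 < d) (hdiag : ∀ i, A i i ≤ d) (v : Fin n → ℝ) :
    wNorm η (v - d⁻¹ • A *ᵥ v) ≤ wNorm η v := by
  have hN : 0 ≤ wNorm η v := (wNorm_eq_norm_div hη v) ▸ norm_nonneg _
  set N := wNorm η v
  refine wNorm_le_of_abs_le hη hN fun i => ?_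
  set S := ∑ j ∈ Finset.univ.erase i, A i j * v j
  have hdiag' : 0 ≤ 1 - d⁻¹ * A i i := by
    rw [sub_nonneg, inv_mul_le_iff₀ hd, mul_one]; exact hdiag i
  have hsplit : v i - d⁻¹ * (A *ᵥ v) i = (1 - d⁻¹ * A i i) * v i - d⁻¹ * S := by
    rw [Matrix.mulVec, dotProduct, ← Finset.add_sum_erase _ _ (Finset.mem_univ i)]; ring
  have hS : |S| ≤ η i * A i i * N :=
    calc |S| ≤ ∑ j ∈ Finset.univ.erase i, |A i j| * (η j * N) := by
          refine (Finset.abs_sum_le_sum_abs _ _).trans (Finset.sum_le_sum fun j _ => ?_)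
          rw [abs_mul]; gcongr; exact abs_le_mul_wNorm hη v j
      _ = (∑ j ∈ Finset.univ.erase i, η j * |A i j|) * N := by
          rw [Finset.sum_mul]; exact Finset.sum_congr rfl fun j _ => by ring
      _ ≤ η i * A i i * N :=
          mul_le_mul_of_nonneg_right (sum_erase_mul_abs_le_of_logNorm_neg_nonpos hη hA i) hN
  calc |(v - d⁻¹ • A *ᵥ v) i| = |(1 - d⁻¹ * A i i) * v i - d⁻¹ * S| := by
        rw [Pi.sub_apply, Pi.smul_apply, smul_eq_mul, hsplit]
    _ ≤ (1 - d⁻¹ * A i i) * |v i| + d⁻¹ * |S| := by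
        refine (abs_sub _ _).trans_eq ?_
        rw [abs_mul, abs_mul, abs_of_nonneg hdiag', abs_of_pos (inv_pos.2 hd)]
    _ ≤ (1 - d⁻¹ * A i i) * (η i * N) + d⁻¹ * (η i * A i i * N) := by
        gcongr; exact abs_le_mul_wNorm hη v i
    _ = η i * N := by ring

lemma jac_eq_toMatrix' (F : (Fin n → ℝ) → (Fin n → ℝ)) (p : Fin n → ℝ) :
    jac F p = LinearMap.toMatrix' (fderiv ℝ F p : (Fin n → ℝ) →ₗ[ℝ] (Fin n → ℝ)) := by
  ext i j
  simp [jac, LinearMap.toMatrix'_apply]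

lemma fderiv_apply_eq_jac_mulVec (F : (Fin n → ℝ) → (Fin n → ℝ)) (p v : Fin n → ℝ) :
    fderiv ℝ F p v = jac F p *ᵥ v := by
  rw [jac_eq_toMatrix', LinearMap.toMatrix'_mulVec]; rfl

lemma wNorm_sub_le_of_wNorm_fderiv_le (hη : ∀ i, 0 < η i)
    {G : (Fin n → ℝ) → (Fin n → ℝ)} (hG : Differentiable ℝ G)
    (hG' : ∀ p u, wNorm η (fderiv ℝ G p u) ≤ wNorm η u) (a b : Fin n → ℝ) :
    wNorm η (G a - G b) ≤ wNorm η (a - b) := by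
  simp only [wNorm_eq_norm_div hη] at hG' ⊢
  have hderiv : ∀ t : ℝ, HasDerivAt (fun t : ℝ => G (b + t • (a - b)) / η)
      (fderiv ℝ G (b + t • (a - b)) (a - b) / η) t := fun t => by
    have hline : HasDerivAt (fun t : ℝ => b + t • (a - b)) (a - b) t := by
      simpa using ((hasDerivAt_id t).smul_const (a - b)).const_add b
    simp only [div_eq_mul_inv]
    exact ((hG _).hasFDerivAt.comp_hasDerivAt t hline).mul_const η⁻¹
  have h := norm_image_sub_le_of_norm_deriv_le_segment_01' (C := ‖(a - b) / η‖)
    (fun t _ => (hderiv t).hasDerivWithinAt) (fun t _ => hG' _ _)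
  have hdiff : (G a - G b) / η = G a / η - G b / η := by ext i; simp [sub_div]
  simpa [hdiff] using h

lemma wNorm_sub_inv_smul_sub_le (hη : ∀ i, 0 < η i)
    {F : (Fin n → ℝ) → (Fin n → ℝ)} (hF : Differentiable ℝ F)
    (hmono : ∀ x, logNorm η (-(jac F x)) ≤ 0) {d : ℝ} (hd : 0 < d)
    (hdiag : ∀ x i, jac F x i i ≤ d) (a b : Fin n → ℝ) :
    wNorm η ((a - d⁻¹ • F a) - (b - d⁻¹ • F b)) ≤ wNorm η (a - b) := by
  refine wNorm_sub_le_of_wNorm_fderiv_le hη (G := fun u => u - d⁻¹ • F u)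
    (by fun_prop) (fun p u => ?_) a b
  have hG : HasFDerivAt (fun u => u - d⁻¹ • F u)
      (ContinuousLinearMap.id ℝ _ - d⁻¹ • fderiv ℝ F p) p :=
    (hasFDerivAt_id p).sub ((hF p).hasFDerivAt.const_smul d⁻¹)
  rw [hG.fderiv]
  simpa [fderiv_apply_eq_jac_mulVec] using wNorm_sub_inv_smul_mulVec_le hη (hmono p) hd (hdiag p) u

lemma lipschitzWith_one_mul_div_of_wNorm_sub_le (hη : ∀ i, 0 < η i)
    {T : (Fin n → ℝ) → (Fin n → ℝ)} (hT : ∀ a b, wNorm η (T a - T b) ≤ wNorm η (a - b)) :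
    LipschitzWith 1 fun w => T (w * η) / η := by
  refine lipschitzWith_iff_norm_sub_le.2 fun a b => ?_
  have hT' := hT (a * η) (b * η)
  rw [wNorm_eq_norm_div hη, wNorm_eq_norm_div hη] at hT'
  have h1 : (T (a * η) - T (b * η)) / η = T (a * η) / η - T (b * η) / η := by
    ext i; simp [sub_div]
  have h2 : (a * η - b * η) / η = a - b := by
    ext i; simp [← sub_mul, (hη i).ne']
  rw [h1, h2] at hT'
  simpa using hT'

end WeightedNorm

theorem stmt_8_general {n : ℕ} (η : Fin n → ℝ) (hη : ∀ i, 0 < η i)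
    (F : (Fin n → ℝ) → (Fin n → ℝ)) (hF : ContDiff ℝ 1 F)
    (hmono : ∀ x, logNorm η (-(jac F x)) ≤ 0)
    (d : ℝ) (hd : 0 < d) (hdiag : ∀ x i, jac F x i i ≤ d)
    (hzero : ∃ z : Fin n → ℝ, F z = 0)
    (α : ℝ) (hα : α ∈ Set.Ioo (0 : ℝ) (1 / d))
    (x : ℕ → (Fin n → ℝ)) (hx : ∀ k, x (k + 1) = x k - α • F (x k)) :
    ∃ xs : Fin n → ℝ, F xs = 0 ∧ Tendsto x atTop (nhds xs) := by
  obtain ⟨hα0, hαd⟩ := hα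
  have hθ0 : 0 < α * d := mul_pos hα0 hd
  have hθ1 : α * d < 1 := by rwa [lt_div_iff₀ hd] at hαd
  have hcancel : ∀ v : Fin n → ℝ, v / η * η = v := fun v => by ext i; simp [(hη i).ne']
  set T : (Fin n → ℝ) → (Fin n → ℝ) := fun u => u - d⁻¹ • F u
  have hS := lipschitzWith_one_mul_div_of_wNorm_sub_le hη
    (wNorm_sub_inv_smul_sub_le hη (hF.differentiable one_ne_zero) hmono hd hdiag)
  have hKM : IsKrasnoselskiiMannSeq (fun w => T (w * η) / η) (α * d) fun k => x k / η := by
    intro k; ext i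
    simp only [T, hcancel, hx k, Pi.add_apply, Pi.sub_apply, Pi.smul_apply, Pi.div_apply,
      smul_eq_mul]
    field_simp
    ring
  obtain ⟨z, hz⟩ := hzero
  obtain ⟨c, hc, hlim⟩ := hKM.exists_isFixedPt_tendsto hS hθ0 hθ1 (z := z / η) (by
    simp [IsFixedPt, T, hcancel, hz])
  refine ⟨c * η, ?_, ?_⟩
  · have hTc : T (c * η) = c * η := by rw [← hcancel (T (c * η))]; exact congrArg (· * η) hc
    have hFc : d⁻¹ • F (c * η) = 0 := by simpa [T] using hTc
    exact (smul_eq_zero.1 hFc).resolve_left (inv_ne_zero hd.ne')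
  · simpa [hcancel] using hlim.mul_const η

/-- Forward step method: weakly monotone case. -/
theorem stmt_8 {n : ℕ} (η : Fin n → ℝ) (hη : ∀ i, 0 < η i)
    (F : (Fin n → ℝ) → (Fin n → ℝ)) (hF : ContDiff ℝ 1 F)
    (L : ℝ) (hL : ∀ x y, wNorm η (F x - F y) ≤ L * wNorm η (x - y))
    (hmono : ∀ x, logNorm η (-(jac F x)) ≤ 0)
    (d : ℝ) (hd : 0 < d) (hdiag : ∀ x i, jac F x i i ≤ d)
    (hzero : ∃ z : Fin n → ℝ, F z = 0)
    (α : ℝ) (hα : α ∈ Set.Ioo (0 : ℝ) (1 / d))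
    (x : ℕ → (Fin n → ℝ)) (hx : ∀ k, x (k + 1) = x k - α • F (x k)) :
    ∃ xs : Fin n → ℝ, F xs = 0 ∧ Tendsto x atTop (nhds xs) :=
  stmt_8_general η hη F hF hmono d hd hdiag hzero α hα x hx
end

section
/- (Cayley method, strongly monotone case.) Let η ∈ ℝⁿ be a positive vector and let F : ℝⁿ → ℝⁿ be continuously differentiable with μ_{∞,η⁻¹}(−DF(x)) ≤ −c for all x ∈ ℝⁿ, where c > 0, and let d > 0 be a diagonal bound for F. Let x* be the unique zero of F, let α ∈ (0, 1/d], and let (x_k) and (y_k) be sequences satisfying y_k + αF(y_k) = x_k and x_{k+1} = 2y_k − x_k for all k. Then ‖x_{k+1} − x*‖_{∞,η⁻¹} ≤ ((1 − αc)/(1 + αc)) ‖x_k − x*‖_{∞,η⁻¹} for all k; consequently x_k → x* as k → ∞. -/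
/-!
Put `w = u - v`. Applying the mean value theorem to each coordinate gives
`(F u - F v)_i = (DF(p_i) w)_i` for some point `p_i` depending on `i`, and the bounds below are
row-wise, so the Jacobian may be taken at a different point in each row. The log-norm bound
says each row of `DF(p_i)` is weighted diagonally dominant with margin `c`. Because `α d ≤ 1`
makes `1 - α DF_ii ≥ 0`, every row gives `‖w - α (F u - F v)‖ ≤ (1 - α c) ‖w‖`, and a row
where `|w_i| / η_i` is largest gives `(1 + α c) ‖w‖ ≤ ‖w + α (F u - F v)‖`. With `u = y_k`
and `v = x*`, these two vectors are `x_{k+1} - x*` and `x_k - x*`.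
-/

open Filter

open Finset Matrix

section WeightedNorm

variable {n : ℕ} {η : Fin n → ℝ}

lemma wNorm_nonneg (hη : ∀ i, 0 < η i) (z : Fin n → ℝ) : 0 ≤ wNorm η z :=
  Real.iSup_nonneg fun i => div_nonneg (abs_nonneg _) (hη i).le

lemma abs_div_le_wNorm (z : Fin n → ℝ) (i : Fin n) : |z i| / η i ≤ wNorm η z :=
  le_ciSup (f := fun i => |z i| / η i) (Set.finite_range _).bddAbove i

lemma abs_le_wNorm_mul (hη : ∀ i, 0 < η i) (z : Fin n → ℝ) (i : Fin n) :
    |z i| ≤ wNorm η z * η i :=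
  (div_le_iff₀ (hη i)).1 (abs_div_le_wNorm z i)

lemma wNorm_of_isEmpty [IsEmpty (Fin n)] (z : Fin n → ℝ) : wNorm η z = 0 :=
  Real.iSup_of_isEmpty _

lemma wNorm_le_mul_wNorm (hη : ∀ i, 0 < η i) {z w : Fin n → ℝ} {K : ℝ}
    (h : ∀ i, |z i| ≤ K * (wNorm η w * η i)) : wNorm η z ≤ K * wNorm η w := by
  rcases isEmpty_or_nonempty (Fin n) with _ | _
  · simp [wNorm_of_isEmpty]
  · exact ciSup_le fun i => (div_le_iff₀ (hη i)).2 <| (h i).trans_eq (mul_assoc _ _ _).symm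

lemma mul_wNorm_le_wNorm (hη : ∀ i, 0 < η i) {z w : Fin n → ℝ} {K : ℝ}
    (h : ∀ i, |w i| = wNorm η w * η i → K * (wNorm η w * η i) ≤ |z i|) :
    K * wNorm η w ≤ wNorm η z := by
  rcases isEmpty_or_nonempty (Fin n) with _ | _
  · simp [wNorm_of_isEmpty]
  · obtain ⟨i, hi⟩ := exists_eq_ciSup_of_finite (f := fun i => |w i| / η i)
    have hwi : |w i| = wNorm η w * η i := by
      rw [wNorm, ← hi, div_mul_cancel₀ _ (hη i).ne']
    calc K * wNorm η w = K * (wNorm η w * η i) / η i := by field_simp [(hη i).ne']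
      _ ≤ |z i| / η i := div_le_div_of_nonneg_right (h i hwi) (hη i).le
      _ ≤ wNorm η z := abs_div_le_wNorm z i

lemma tendsto_of_wNorm_sub_tendsto_zero (hη : ∀ i, 0 < η i) {x : ℕ → Fin n → ℝ}
    {x₀ : Fin n → ℝ} (h : Tendsto (fun k => wNorm η (x k - x₀)) atTop (nhds 0)) :
    Tendsto x atTop (nhds x₀) := by
  refine tendsto_pi_nhds.2 fun i => tendsto_iff_dist_tendsto_zero.2 ?_
  refine squeeze_zero (fun k => dist_nonneg) (fun k => ?_) (by simpa using h.mul_const (η i))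
  simpa [Real.dist_eq] using abs_le_wNorm_mul hη (x k - x₀) i

end WeightedNorm

lemma tendsto_zero_of_le_mul_of_lt_one {a : ℕ → ℝ} {ρ : ℝ} (ha : ∀ k, 0 ≤ a k) (hρ : ρ < 1)
    (h : ∀ k, a (k + 1) ≤ ρ * a k) : Tendsto a atTop (nhds 0) := by
  set ρ' := max ρ 0
  have hgeom (k : ℕ) : a k ≤ ρ' ^ k * a 0 :=
    le_geom (le_max_right _ _) k fun j _ =>
      (h j).trans (mul_le_mul_of_nonneg_right (le_max_left _ _) (ha j))
  have hpow := (tendsto_pow_atTop_nhds_zero_of_lt_one (le_max_right ρ 0)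
    (max_lt hρ one_pos)).mul_const (a 0)
  rw [zero_mul] at hpow
  exact squeeze_zero ha hgeom hpow

section LogNorm

variable {n : ℕ} {η : Fin n → ℝ} {A : Matrix (Fin n) (Fin n) ℝ} {c : ℝ}

lemma add_offDiag_le_of_logNorm_neg_le (hA : logNorm η (-A) ≤ -c) (i : Fin n) :
    c + ∑ j ∈ univ.erase i, (η j / η i) * |A i j| ≤ A i i := by
  have hi : (-A) i i + ∑ j ∈ univ.erase i, (η j / η i) * |(-A) i j| ≤ -c :=
    (le_ciSup (f := fun i => (-A) i i + ∑ j ∈ univ.erase i, (η j / η i) * |(-A) i j|)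
      (Set.finite_range _).bddAbove i).trans hA
  simp only [Matrix.neg_apply, abs_neg] at hi
  linarith

lemma le_diag_of_logNorm_neg_le (hη : ∀ i, 0 < η i) (hA : logNorm η (-A) ≤ -c) (i : Fin n) :
    c ≤ A i i := by
  have : 0 ≤ ∑ j ∈ univ.erase i, (η j / η i) * |A i j| :=
    sum_nonneg fun j _ => mul_nonneg (div_nonneg (hη j).le (hη i).le) (abs_nonneg _)
  linarith [add_offDiag_le_of_logNorm_neg_le hA i]

lemma mulVec_apply_eq_diag_add_offDiag (w : Fin n → ℝ) (i : Fin n) :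
    (A *ᵥ w) i = A i i * w i + ∑ j ∈ univ.erase i, A i j * w j :=
  (add_sum_erase _ _ (mem_univ i)).symm

lemma abs_offDiag_mulVec_le (hη : ∀ i, 0 < η i) (hA : logNorm η (-A) ≤ -c)
    (w : Fin n → ℝ) (i : Fin n) :
    |∑ j ∈ univ.erase i, A i j * w j| ≤ wNorm η w * η i * (A i i - c) := by
  have hoff : ∑ j ∈ univ.erase i, (η j / η i) * |A i j| ≤ A i i - c := by
    linarith [add_offDiag_le_of_logNorm_neg_le hA i]
  calc |∑ j ∈ univ.erase i, A i j * w j| ≤ ∑ j ∈ univ.erase i, |A i j| * (wNorm η w * η j) :=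
        (abs_sum_le_sum_abs _ _).trans <| sum_le_sum fun j _ => by
          rw [abs_mul]; exact mul_le_mul_of_nonneg_left (abs_le_wNorm_mul hη w j) (abs_nonneg _)
    _ = wNorm η w * η i * ∑ j ∈ univ.erase i, (η j / η i) * |A i j| := by
        rw [mul_sum]
        refine sum_congr rfl fun j _ => ?_
        field_simp [(hη i).ne']
    _ ≤ wNorm η w * η i * (A i i - c) :=
        mul_le_mul_of_nonneg_left hoff (mul_nonneg (wNorm_nonneg hη w) (hη i).le)

lemma abs_sub_smul_mulVec_le (hη : ∀ i, 0 < η i) (hA : logNorm η (-A) ≤ -c) {α : ℝ}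
    (hα : 0 ≤ α) (w : Fin n → ℝ) {i : Fin n} (hαA : α * A i i ≤ 1) :
    |w i - α * (A *ᵥ w) i| ≤ (1 - α * c) * (wNorm η w * η i) := by
  set T := ∑ j ∈ univ.erase i, A i j * w j
  have hT := abs_offDiag_mulVec_le hη hA w i
  calc |w i - α * (A *ᵥ w) i| = |(1 - α * A i i) * w i - α * T| := by
        rw [mulVec_apply_eq_diag_add_offDiag]; congr 1; ring
    _ ≤ (1 - α * A i i) * |w i| + α * |T| := by
        refine (abs_sub _ _).trans_eq ?_
        rw [abs_mul, abs_mul, abs_of_nonneg (by linarith), abs_of_nonneg hα]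
    _ ≤ (1 - α * A i i) * (wNorm η w * η i) + α * (wNorm η w * η i * (A i i - c)) := by
        have h1 : 0 ≤ 1 - α * A i i := by linarith
        gcongr
        exact abs_le_wNorm_mul hη w i
    _ = (1 - α * c) * (wNorm η w * η i) := by ring

lemma le_abs_add_smul_mulVec (hη : ∀ i, 0 < η i) (hA : logNorm η (-A) ≤ -c) {α : ℝ}
    (hα : 0 ≤ α) {w : Fin n → ℝ} {i : Fin n} (hi : |w i| = wNorm η w * η i) :
    (1 + α * c) * (wNorm η w * η i) ≤ |w i + α * (A *ᵥ w) i| := by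
  set T := ∑ j ∈ univ.erase i, A i j * w j
  have hT := abs_offDiag_mulVec_le hη hA w i
  calc (1 + α * c) * (wNorm η w * η i)
        = (1 + α * A i i) * |w i| - α * (wNorm η w * η i * (A i i - c)) := by rw [hi]; ring
    _ ≤ |(1 + α * A i i) * w i| - |α * T| := by
        rw [abs_mul, abs_mul, abs_of_nonneg hα]
        gcongr
        exact le_abs_self _
    _ ≤ |(1 + α * A i i) * w i + α * T| := abs_sub_abs_le_abs_add _ _
    _ = |w i + α * (A *ᵥ w) i| := by rw [mulVec_apply_eq_diag_add_offDiag]; congr 1; ring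

end LogNorm

section Jacobian

variable {n : ℕ} {F : (Fin n → ℝ) → (Fin n → ℝ)}

lemma jac_mulVec (p w : Fin n → ℝ) : jac F p *ᵥ w = fderiv ℝ F p w := by
  have : jac F p = LinearMap.toMatrix' (fderiv ℝ F p : (Fin n → ℝ) →ₗ[ℝ] Fin n → ℝ) := by
    ext i j
    simp [jac, LinearMap.toMatrix'_apply]
  rw [this, LinearMap.toMatrix'_mulVec]
  rfl

lemma exists_sub_apply_eq_jac_mulVec (hF : Differentiable ℝ F) (u v : Fin n → ℝ) (i : Fin n) :
    ∃ p, (F u - F v) i = (jac F p *ᵥ (u - v)) i := by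
  have hγ (t : ℝ) : HasDerivAt (fun s : ℝ => v + s • (u - v)) (u - v) t := by
    simpa using ((hasDerivAt_id t).smul_const (u - v)).const_add v
  have hd (t : ℝ) : HasDerivAt (fun s => F (v + s • (u - v)) i)
      (fderiv ℝ F (v + t • (u - v)) (u - v) i) t :=
    hasDerivAt_pi.1 ((hF _).hasFDerivAt.comp_hasDerivAt t (hγ t)) i
  obtain ⟨t, -, ht⟩ := exists_hasDerivAt_eq_slope _ _ zero_lt_one
    (fun t _ => (hd t).continuousAt.continuousWithinAt) (fun t _ => hd t)
  refine ⟨v + t • (u - v), ?_⟩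
  rw [jac_mulVec, ht]
  simp

variable {η : Fin n → ℝ} {c d α : ℝ}

lemma wNorm_sub_smul_sub_le (hη : ∀ i, 0 < η i) (hF : Differentiable ℝ F)
    (hmono : ∀ x, logNorm η (-(jac F x)) ≤ -c) (hdiag : ∀ x i, jac F x i i ≤ d)
    (hα : 0 ≤ α) (hαd : α * d ≤ 1) (u v : Fin n → ℝ) :
    wNorm η ((u - v) - α • (F u - F v)) ≤ (1 - α * c) * wNorm η (u - v) := by
  refine wNorm_le_mul_wNorm hη fun i => ?_
  obtain ⟨p, hp⟩ := exists_sub_apply_eq_jac_mulVec hF u v i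
  have hαA : α * jac F p i i ≤ 1 := (mul_le_mul_of_nonneg_left (hdiag p i) hα).trans hαd
  simpa [hp] using abs_sub_smul_mulVec_le hη (hmono p) hα (u - v) hαA

lemma mul_wNorm_le_wNorm_add_smul_sub (hη : ∀ i, 0 < η i) (hF : Differentiable ℝ F)
    (hmono : ∀ x, logNorm η (-(jac F x)) ≤ -c) (hα : 0 ≤ α) (u v : Fin n → ℝ) :
    (1 + α * c) * wNorm η (u - v) ≤ wNorm η ((u - v) + α • (F u - F v)) := by
  refine mul_wNorm_le_wNorm hη fun i hi => ?_
  obtain ⟨p, hp⟩ := exists_sub_apply_eq_jac_mulVec hF u v i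
  simpa [hp] using le_abs_add_smul_mulVec hη (hmono p) hα hi

lemma wNorm_cayley_sub_le (hη : ∀ i, 0 < η i) (hF : Differentiable ℝ F)
    (hmono : ∀ x, logNorm η (-(jac F x)) ≤ -c) (hdiag : ∀ x i, jac F x i i ≤ d)
    (hc : 0 ≤ c) (hα : 0 ≤ α) (hαd : α * d ≤ 1) {x y xs : Fin n → ℝ} (hxs : F xs = 0)
    (hy : y + α • F y = x) :
    wNorm η ((2 : ℝ) • y - x - xs) ≤ ((1 - α * c) / (1 + α * c)) * wNorm η (x - xs) := by
  subst hy
  have e₁ : (2 : ℝ) • y - (y + α • F y) - xs = (y - xs) - α • (F y - F xs) := by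
    rw [hxs]; module
  have e₂ : y + α • F y - xs = (y - xs) + α • (F y - F xs) := by
    rw [hxs]; module
  rcases isEmpty_or_nonempty (Fin n) with _ | ⟨⟨i⟩⟩
  · simp [wNorm_of_isEmpty]
  have hαc : α * c ≤ 1 := (mul_le_mul_of_nonneg_left
    ((le_diag_of_logNorm_neg_le hη (hmono xs) i).trans (hdiag xs i)) hα).trans hαd
  have hpos : 0 < 1 + α * c := by positivity
  rw [e₁, e₂, div_mul_eq_mul_div, le_div_iff₀ hpos]
  calc wNorm η ((y - xs) - α • (F y - F xs)) * (1 + α * c)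
      ≤ (1 - α * c) * wNorm η (y - xs) * (1 + α * c) :=
        mul_le_mul_of_nonneg_right (wNorm_sub_smul_sub_le hη hF hmono hdiag hα hαd y xs) hpos.le
    _ = (1 - α * c) * ((1 + α * c) * wNorm η (y - xs)) := by ring
    _ ≤ (1 - α * c) * wNorm η ((y - xs) + α • (F y - F xs)) :=
        mul_le_mul_of_nonneg_left (mul_wNorm_le_wNorm_add_smul_sub hη hF hmono hα y xs)
          (by linarith)

end Jacobian

/-- Cayley method: strongly monotone case. -/
theorem stmt_11 {n : ℕ} (η : Fin n → ℝ) (hη : ∀ i, 0 < η i)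
    (F : (Fin n → ℝ) → (Fin n → ℝ)) (hF : ContDiff ℝ 1 F)
    (c : ℝ) (hc : 0 < c) (hmono : ∀ x, logNorm η (-(jac F x)) ≤ -c)
    (d : ℝ) (hd : 0 < d) (hdiag : ∀ x i, jac F x i i ≤ d)
    (xs : Fin n → ℝ) (hxs : F xs = 0)
    (α : ℝ) (hα : α ∈ Set.Ioc (0 : ℝ) (1 / d))
    (x y : ℕ → (Fin n → ℝ))
    (hy : ∀ k, y k + α • F (y k) = x k)
    (hx : ∀ k, x (k + 1) = (2 : ℝ) • y k - x k) :
    (∀ k, wNorm η (x (k + 1) - xs) ≤ ((1 - α * c) / (1 + α * c)) * wNorm η (x k - xs)) ∧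
    Tendsto x atTop (nhds xs) := by
  obtain ⟨hα₀, hαd⟩ := hα
  rw [le_div_iff₀ hd] at hαd
  have step (k : ℕ) :
      wNorm η (x (k + 1) - xs) ≤ ((1 - α * c) / (1 + α * c)) * wNorm η (x k - xs) := by
    rw [hx k]
    exact wNorm_cayley_sub_le hη (hF.differentiable one_ne_zero) hmono hdiag hc.le hα₀.le hαd
      hxs (hy k)
  have hρ : (1 - α * c) / (1 + α * c) < 1 := by
    have := mul_pos hα₀ hc
    rw [div_lt_one (by positivity)]
    linarith
  exact ⟨step, tendsto_of_wNorm_sub_tendsto_zero hη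
    (tendsto_zero_of_le_mul_of_lt_one (fun k => wNorm_nonneg hη _) hρ step)⟩
end
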